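/- Let x = p/q be a rational number in lowest terms with q > 2 (q > 0), and let u and v be the two Farey parents of x, with the denominator of u strictly smaller than the denominator of v (the denominators are distinct since q > 2). Then d(u) = d(x) − 1; that is, the parent with smaller denominator realizes the minimum in the depth recursion. -/
import Mathlib


/-- The continued fraction value `[a₁, …, aₙ] = 1/(a₁ + 1/(a₂ + ⋯ + 1/aₙ))` of a
list of integers, defined recursively with `[] = 0`, using the total division of `ℚ`. -/
def cfVal : List ℤ → ℚ
  | [] => 0
  | a :: l => 1 / ((a : ℚ) + cfVal l)

/-- `u` and `v` are the two Farey parents of `x`: there are integers `a, b, c, d` with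
`1 ≤ b, d`, `b + d = q`, `a + c = p`, `a·d − b·c = ±1`, `u = a/b` and `v = c/d`,
where `x = p/q` in lowest terms. -/
def IsFareyParents (x u v : ℚ) : Prop :=
  ∃ a b c d : ℤ, 1 ≤ b ∧ 1 ≤ d ∧ b + d = (x.den : ℤ) ∧ a + c = x.num ∧
    (a * d - b * c = 1 ∨ a * d - b * c = -1) ∧
    u = (a : ℚ) / (b : ℚ) ∧ v = (c : ℚ) / (d : ℚ)

/-- The graph of the depth function on `ℚ`: integers have depth `0`, and otherwise
`d(x) = 1 + min(d(u), d(v))` where `u, v` are the two Farey parents of `x`. -/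
inductive DepthRel : ℚ → ℕ → Prop
  | int (x : ℚ) (h : x.den = 1) : DepthRel x 0
  | step (x u v : ℚ) (m k : ℕ) (h : x.den ≠ 1) (hp : IsFareyParents x u v)
      (hu : DepthRel u m) (hv : DepthRel v k) : DepthRel x (1 + min m k)

/-- The depth `d(x)` of a rational number. -/
noncomputable def fareyDepth (x : ℚ) : ℕ := sInf {n | DepthRel x n}

lemma coprime_of_comb {a b : ℤ} (u v : ℤ) (h : u * a + v * b = 1) :
    Nat.Coprime a.natAbs b.natAbs :=
  Int.isCoprime_iff_gcd_eq_one.mp ⟨u, v, h⟩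

lemma rat_cop (x : ℚ) : IsCoprime x.num (x.den : ℤ) := by
  rw [Int.isCoprime_iff_gcd_eq_one]
  simpa [Int.gcd] using x.reduced

/-- coprimality of the numerator/denominator of the first parent -/
lemma cop_ab {a b c d : ℤ} (hdet : a * d - b * c = 1 ∨ a * d - b * c = -1) :
    Nat.Coprime a.natAbs b.natAbs := by
  rcases hdet with h | h
  · exact coprime_of_comb d (-c) (by linarith)
  · exact coprime_of_comb (-d) c (by linarith)

lemma cop_cd {a b c d : ℤ} (hdet : a * d - b * c = 1 ∨ a * d - b * c = -1) :
    Nat.Coprime c.natAbs d.natAbs := by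
  rcases hdet with h | h
  · exact coprime_of_comb (-b) a (by linarith)
  · exact coprime_of_comb b (-a) (by linarith)

lemma num_den_div {a b : ℤ} (hb : 0 < b) (h : Nat.Coprime a.natAbs b.natAbs) :
    ((a : ℚ) / b).num = a ∧ (((a : ℚ) / b).den : ℤ) = b :=
  ⟨Rat.num_div_eq_of_coprime hb h, Rat.den_div_eq_of_coprime hb h⟩

/-- existence of a Bezout-type witness in the right range -/
lemma exists_witness (p q : ℤ) (hq : 2 ≤ q) (hco : IsCoprime p q) :
    ∃ a b : ℤ, 1 ≤ b ∧ b < q ∧ a * q - b * p = 1 := by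
  obtain ⟨s, t, hst⟩ := hco
  have hq0 : q ≠ 0 := by omega
  obtain ⟨k, b, hbeq, hb1, hb2⟩ : ∃ k b : ℤ, q * k + b = -s ∧ 0 ≤ b ∧ b < q :=
    ⟨(-s) / q, (-s) % q, Int.mul_ediv_add_emod _ _, Int.emod_nonneg _ hq0,
      Int.emod_lt_of_pos _ (by omega)⟩
  refine ⟨t - k * p, b, ?_, hb2, by linear_combination hst - p * hbeq⟩
  rcases eq_or_lt_of_le hb1 with h0 | h0
  · exfalso
    have hmul : q * (t - k * p) = 1 := by linear_combination hst - p * hbeq + p * h0.symm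
    have : q ≤ 1 := Int.le_of_dvd one_pos ⟨t - k * p, hmul.symm⟩
    omega
  · omega

lemma exists_parents (x : ℚ) (h : x.den ≠ 1) :
    ∃ u v : ℚ, IsFareyParents x u v ∧ u.den < x.den ∧ v.den < x.den := by
  have hq2 : 2 ≤ (x.den : ℤ) := by
    have := x.pos
    omega
  obtain ⟨a, b, hb1, hb2, hab⟩ := exists_witness x.num (x.den : ℤ) hq2 (rat_cop x)
  set p := x.num
  set q : ℤ := (x.den : ℤ)
  set c : ℤ := p - a with hc
  set d : ℤ := q - b with hd
  have hdet : a * d - b * c = 1 := by rw [hc, hd]; linear_combination hab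
  have hdet' : a * d - b * c = 1 ∨ a * d - b * c = -1 := Or.inl hdet
  obtain ⟨hnu, hdu⟩ := num_den_div (by omega) (cop_ab hdet')
  obtain ⟨hnv, hdv⟩ := num_den_div (a := c) (b := d) (by omega) (cop_cd hdet')
  refine ⟨(a : ℚ) / b, (c : ℚ) / d, ⟨a, b, c, d, hb1, by omega, by omega, by omega,
    hdet', rfl, rfl⟩, ?_, ?_⟩
  · omega
  · omega

lemma depthRel_total : ∀ N, ∀ x : ℚ, x.den ≤ N → ∃ n, DepthRel x n := by
  intro N
  induction N using Nat.strong_induction_on with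
  | _ N ih =>
    intro x hx
    by_cases h : x.den = 1
    · exact ⟨0, .int x h⟩
    · obtain ⟨u, v, hp, hu, hv⟩ := exists_parents x h
      have hxpos := x.pos
      obtain ⟨m, hm⟩ := ih u.den (by omega) u le_rfl
      obtain ⟨k, hk⟩ := ih v.den (by omega) v le_rfl
      exact ⟨_, .step x u v m k h hp hm hk⟩

lemma witness_unique {p q a b a' b' : ℤ} (hcop : IsCoprime p q) (hb : 1 ≤ b) (hb' : 1 ≤ b')
    (hbq : b < q) (hb'q : b' < q)
    (h : a * q - b * p = a' * q - b' * p) : a = a' ∧ b = b' := by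
  have hdvd : q ∣ (b - b') * p := ⟨a - a', by linear_combination -h⟩
  have hq2 : q ∣ b - b' := (hcop.symm).dvd_of_dvd_mul_right hdvd
  have h0 : b - b' = 0 := Int.eq_zero_of_dvd_of_natAbs_lt_natAbs hq2 (by omega)
  have hb'' : b = b' := by omega
  subst hb''
  constructor
  · have h1 : (a - a') * q = 0 := by linear_combination h
    rcases mul_eq_zero.mp h1 with h2 | h2 <;> omega
  · rfl

lemma parents_unique {x u v u' v' : ℚ} (h : IsFareyParents x u v)
    (h' : IsFareyParents x u' v') : (u = u' ∧ v = v') ∨ (u = v' ∧ v = u') := by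
  obtain ⟨a, b, c, d, hb, hd, hbd, hac, hdet, hu, hv⟩ := h
  obtain ⟨a', b', c', d', hb', hd', hbd', hac', hdet', hu', hv'⟩ := h'
  set p := x.num
  set q : ℤ := (x.den : ℤ)
  have hcop := rat_cop x
  have e1 : a * q - b * p = a * d - b * c := by linear_combination b * hac - a * hbd
  have e2 : c * q - d * p = -(a * d - b * c) := by linear_combination d * hac - c * hbd
  have e1' : a' * q - b' * p = a' * d' - b' * c' := by linear_combination b' * hac' - a' * hbd'
  have e2' : c' * q - d' * p = -(a' * d' - b' * c') := by
    linear_combination d' * hac' - c' * hbd'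
  rcases hdet with h1 | h1 <;> rcases hdet' with h2 | h2
  · -- same sign +1 : (a,b)=(a',b'), (c,d)=(c',d')
    left
    obtain ⟨ea, eb⟩ := witness_unique hcop hb hb' (by omega) (by omega)
      (by rw [e1, e1', h1, h2])
    obtain ⟨ec, ed⟩ := witness_unique hcop hd hd' (by omega) (by omega)
      (by rw [e2, e2', h1, h2])
    subst ea; subst eb; subst ec; subst ed
    exact ⟨hu.trans hu'.symm, hv.trans hv'.symm⟩
  · right
    obtain ⟨ea, eb⟩ := witness_unique hcop hb hd' (by omega) (by omega)
      (by rw [e1, e2', h1, h2]; try norm_num)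
    obtain ⟨ec, ed⟩ := witness_unique hcop hd hb' (by omega) (by omega)
      (by rw [e2, e1', h1, h2]; try norm_num)
    subst ea; subst eb; subst ec; subst ed
    exact ⟨hu.trans hv'.symm, hv.trans hu'.symm⟩
  · right
    obtain ⟨ea, eb⟩ := witness_unique hcop hb hd' (by omega) (by omega)
      (by rw [e1, e2', h1, h2]; try norm_num)
    obtain ⟨ec, ed⟩ := witness_unique hcop hd hb' (by omega) (by omega)
      (by rw [e2, e1', h1, h2]; try norm_num)
    subst ea; subst eb; subst ec; subst ed
    exact ⟨hu.trans hv'.symm, hv.trans hu'.symm⟩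
  · left
    obtain ⟨ea, eb⟩ := witness_unique hcop hb hb' (by omega) (by omega)
      (by rw [e1, e1', h1, h2])
    obtain ⟨ec, ed⟩ := witness_unique hcop hd hd' (by omega) (by omega)
      (by rw [e2, e2', h1, h2])
    subst ea; subst eb; subst ec; subst ed
    exact ⟨hu.trans hu'.symm, hv.trans hv'.symm⟩

lemma depthRel_unique {x : ℚ} {n : ℕ} (h : DepthRel x n) :
    ∀ {m}, DepthRel x m → m = n := by
  induction h with
  | int y hy =>
    intro m hm
    cases hm with
    | int => rfl
    | step _ _ _ _ _ h' => exact absurd hy h'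
  | step y u v m k hy hp hu hv ihu ihv =>
    intro n' hn'
    cases hn' with
    | int _ h1 => exact absurd h1 hy
    | step _ u' v' m' k' _ hp' hu' hv' =>
      rcases parents_unique hp' hp with ⟨hu2, hv2⟩ | ⟨hu2, hv2⟩
      · have e1 := ihu (hu2 ▸ hu')
        have e2 := ihv (hv2 ▸ hv')
        omega
      · have e1 := ihv (hu2 ▸ hu')
        have e2 := ihu (hv2 ▸ hv')
        omega

lemma fareyDepth_spec (x : ℚ) : DepthRel x (fareyDepth x) :=
  Nat.sInf_mem (depthRel_total x.den x le_rfl)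

lemma fareyDepth_eq {x : ℚ} {n : ℕ} (h : DepthRel x n) : fareyDepth x = n :=
  (depthRel_unique h (fareyDepth_spec x)).symm.symm ▸ depthRel_unique h (fareyDepth_spec x)

lemma fareyDepth_step {x u v : ℚ} (h : x.den ≠ 1) (hp : IsFareyParents x u v) :
    fareyDepth x = 1 + min (fareyDepth u) (fareyDepth v) :=
  fareyDepth_eq (DepthRel.step x u v _ _ h hp (fareyDepth_spec u) (fareyDepth_spec v))

lemma fareyDepth_int {x : ℚ} (h : x.den = 1) : fareyDepth x = 0 :=
  fareyDepth_eq (DepthRel.int x h)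

/-- The key lemma: if `a/b`, `c/d` form a unimodular pair with `1 ≤ b ≤ d`,
then the depth of `a/b` is at most the depth of `c/d`. -/
lemma key : ∀ N : ℕ, ∀ a b c d : ℤ, 1 ≤ b → b ≤ d → d.toNat ≤ N →
    (a * d - b * c = 1 ∨ a * d - b * c = -1) →
    fareyDepth ((a : ℚ) / b) ≤ fareyDepth ((c : ℚ) / d) := by
  intro N
  induction N using Nat.strong_induction_on with
  | _ N ih =>
    intro a b c d hb hbd hdN hdet
    rcases eq_or_lt_of_le hb with hb1 | hb2
    · -- b = 1 : the left side is an integer, depth 0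
      have : ((a : ℚ) / b).den = 1 := by
        rw [← hb1]; simp
      rw [fareyDepth_int this]
      exact Nat.zero_le _
    · -- 2 ≤ b
      have hbd' : b < d := by
        rcases eq_or_lt_of_le hbd with h1 | h1
        · exfalso
          subst h1
          rcases hdet with h2 | h2
          · have hdvd : b ∣ 1 := ⟨a - c, by linear_combination -h2⟩
            have := Int.le_of_dvd one_pos hdvd
            omega
          · have hdvd : b ∣ 1 := ⟨c - a, by linear_combination h2⟩
            have := Int.le_of_dvd one_pos hdvd
            omega
        · exact h1
      -- compute num/den of v = c/d
      obtain ⟨hnv, hdv⟩ := num_den_div (a := c) (b := d) (by omega) (cop_cd hdet)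
      obtain ⟨hnu, hdu⟩ := num_den_div (a := a) (b := b) (by omega) (cop_ab hdet)
      have hvden1 : ((c : ℚ) / d).den ≠ 1 := by omega
      -- parents of v : a/b and (c-a)/(d-b)
      have hdet2 : a * (d - b) - b * (c - a) = 1 ∨ a * (d - b) - b * (c - a) = -1 := by
        rcases hdet with h1 | h1
        · left; linear_combination h1
        · right; linear_combination h1
      have hpv : IsFareyParents ((c : ℚ) / d) ((a : ℚ) / b) (((c - a : ℤ) : ℚ) / ((d - b : ℤ) : ℚ)) :=
        ⟨a, b, c - a, d - b, hb, by omega, by omega, by omega, hdet2, rfl, rfl⟩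
      rw [fareyDepth_step hvden1 hpv]
      rcases le_or_gt b (d - b) with hc1 | hc1
      · -- b ≤ d - b : IH gives depth(a/b) ≤ depth(w); min is depth(a/b)
        have hIH := ih (d - b).toNat (by omega) a b (c - a) (d - b) hb hc1 le_rfl hdet2
        omega
      · -- d - b < b : IH gives depth(w) ≤ depth(a/b); use parents of a/b
        have hdet3 : (c - a) * b - (d - b) * a = 1 ∨ (c - a) * b - (d - b) * a = -1 := by
          rcases hdet with h1 | h1
          · right; linear_combination -h1
          · left; linear_combination -h1
        have hIH := ih b.toNat (by omega) (c - a) (d - b) a b (by omega) (by omega)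
          le_rfl hdet3
        -- parents of u = a/b : (c-a)/(d-b) and (2a-c)/(2b-d)
        have hdet4 : (c - a) * (2 * b - d) - (d - b) * (2 * a - c) = 1 ∨
            (c - a) * (2 * b - d) - (d - b) * (2 * a - c) = -1 := by
          rcases hdet with h1 | h1
          · right; linear_combination -h1
          · left; linear_combination -h1
        have huden1 : ((a : ℚ) / b).den ≠ 1 := by omega
        have hpu : IsFareyParents ((a : ℚ) / b) (((c - a : ℤ) : ℚ) / ((d - b : ℤ) : ℚ))
            (((2 * a - c : ℤ) : ℚ) / ((2 * b - d : ℤ) : ℚ)) :=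
          ⟨c - a, d - b, 2 * a - c, 2 * b - d, by omega, by omega, by omega, by omega,
            hdet4, rfl, rfl⟩
        rw [fareyDepth_step huden1 hpu]
        omega

/-- If the rational `x = p/q` (in lowest terms) has `q > 2` and `u`, `v` are its two
Farey parents with `den(u) < den(v)`, then `d(u) = d(x) − 1`: the parent with the
smaller denominator realizes the minimum in the depth recursion. -/
theorem stmt11 (x u v : ℚ) (hx : 2 < x.den) (hp : IsFareyParents x u v)
    (hden : u.den < v.den) :
    fareyDepth x = fareyDepth u + 1 := by
  obtain ⟨a, b, c, d, hb, hd, hbd, hac, hdet, hu, hv⟩ := hp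
  obtain ⟨hnu, hdu⟩ := num_den_div (a := a) (b := b) (by omega) (cop_ab hdet)
  obtain ⟨hnv, hdv⟩ := num_den_div (a := c) (b := d) (by omega) (cop_cd hdet)
  have hbd' : b < d := by
    rw [hu] at hden
    rw [hv] at hden
    omega
  have hkey := key d.toNat a b c d hb (by omega) le_rfl hdet
  rw [← hu, ← hv] at hkey
  have hx1 : x.den ≠ 1 := by omega
  rw [fareyDepth_step hx1 ⟨a, b, c, d, hb, hd, hbd, hac, hdet, hu, hv⟩]
  omega
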